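/- arXiv:1301.7098 — 3 statements merged into one kernel-verified Lean document; each statement's English description precedes it below -/
import Mathlib

section
/- Let U be an open bounded subset of H such that its closure Ū is σ-closed, and let f : Ū → H be a σ-admissible map with 0 ∉ f(∂U). Then f^{-1}(0) is σ-closed and σ-compact (compact in the topology σ). -/
open scoped RealInnerProductSpace
open Filter Topology

/-- The topology generated by the "norm-like" function `N` (its open balls). -/
def topOfNormFun {H : Type*} [AddCommGroup H] (N : H → ℝ) : TopologicalSpace H :=
  TopologicalSpace.generateFrom
    {s | ∃ (u : H) (ε : ℝ), 0 < ε ∧ s = {v | N (v - u) < ε}}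

/-!
On a norm-bounded set, `σ`-convergence amounts to convergence of every coordinate `⟪·, b j⟫`,
since the part of `‖·‖₁` beyond index `n` is at most `2⁻ⁿ` times the norm. Along an
ultrafilter on a bounded set the coordinates converge (each stays in a compact interval); by
Bessel the limits are square-summable, hence the coordinates of a vector `u`, and the
ultrafilter `σ`-converges to `u`. So `σ`-closed bounded sets are `σ`-compact.

The zero set is `σ`-closed as the preimage of the `σ`-closed set `{0}` under `f`, and it is
bounded because by Parseval a norm ball is cut out by the `σ`-continuous coordinates, so it is
`σ`-closed and contains the `σ`-closure of `U`.
-/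

section TopOfNormFun

variable {H : Type*} [AddCommGroup H] {N : H → ℝ}

lemma isOpen_topOfNormFun_ball (u : H) {ε : ℝ} (hε : 0 < ε) :
    IsOpen[topOfNormFun N] {v | N (v - u) < ε} :=
  TopologicalSpace.isOpen_generateFrom_of_mem ⟨u, ε, hε, rfl⟩

lemma le_nhds_topOfNormFun (hN : ∀ x y, N (x + y) ≤ N x + N y) {F : Filter H} {u : H}
    (hF : ∀ ε > 0, ∀ᶠ v in F, N (v - u) < ε) : F ≤ @nhds H (topOfNormFun N) u := by
  rw [topOfNormFun, TopologicalSpace.nhds_generateFrom]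
  refine le_iInf₂ fun s ⟨hus, w, ε, hε, hs⟩ => le_principal_iff.2 ?_
  subst hs
  have huw : N (u - w) < ε := hus
  filter_upwards [hF _ (sub_pos.2 huw)] with v hv
  calc N (v - w) = N ((v - u) + (u - w)) := by rw [sub_add_sub_cancel]
    _ ≤ N (v - u) + N (u - w) := hN _ _
    _ < ε := by linarith

lemma isClosed_singleton_zero_topOfNormFun (hN0 : N 0 = 0) (hN_neg : ∀ v, N (-v) = N v)
    (hN_pos : ∀ v ≠ 0, 0 < N v) : IsClosed[topOfNormFun N] {0} := by
  let := topOfNormFun N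
  rw [← isOpen_compl_iff, isOpen_iff_forall_mem_open]
  intro w hw
  refine ⟨{v | N (v - w) < N w}, ?_, isOpen_topOfNormFun_ball w (hN_pos w hw), ?_⟩
  · rintro v hv (rfl : v = 0)
    simp only [Set.mem_ofPred_eq, zero_sub, hN_neg, lt_self_iff_false] at hv
  · show N (w - w) < N w
    rw [sub_self, hN0]
    exact hN_pos w hw

end TopOfNormFun

lemma Ultrafilter.exists_tendsto_of_eventually_abs_le {α : Type*} (F : Ultrafilter α)
    {g : α → ℝ} {M : ℝ} (h : ∀ᶠ x in (F : Filter α), |g x| ≤ M) :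
    ∃ y, Tendsto g F (𝓝 y) := by
  obtain ⟨y, -, hy⟩ := isCompact_Icc.ultrafilter_le_nhds (F.map g)
    (le_principal_iff.2 (h.mono fun x hx => abs_le.1 hx))
  exact ⟨y, hy⟩

lemma summable_half_pow_succ : Summable fun j : ℕ => (1 / 2 : ℝ) ^ (j + 1) :=
  (summable_nat_add_iff 1).2 summable_geometric_two

lemma tsum_half_pow_succ : ∑' j : ℕ, (1 / 2 : ℝ) ^ (j + 1) = 1 := by
  simp only [pow_succ, tsum_mul_right, tsum_geometric_two]
  norm_num

section CoordNorm

variable {H : Type*} [NormedAddCommGroup H] [InnerProductSpace ℝ H] {b : ℕ → H}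

noncomputable def coordNorm (b : ℕ → H) (u : H) : ℝ :=
  ∑' j : ℕ, (1 / 2 : ℝ) ^ (j + 1) * |⟪u, b j⟫|

lemma coordNorm_nonneg (u : H) : 0 ≤ coordNorm b u :=
  tsum_nonneg fun _ => by positivity

lemma coordNorm_zero : coordNorm b (0 : H) = 0 := by
  simp [coordNorm]

lemma coordNorm_neg (u : H) : coordNorm b (-u) = coordNorm b u := by
  simp [coordNorm, inner_neg_left]

namespace Orthonormal

variable (hb : Orthonormal ℝ b)
include hb

lemma abs_inner_le_norm (u : H) (j : ℕ) : |⟪u, b j⟫| ≤ ‖u‖ := by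
  simpa [hb.1 j] using abs_real_inner_le_norm u (b j)

lemma sum_sq_inner_le (u : H) (s : Finset ℕ) : ∑ j ∈ s, ⟪u, b j⟫ ^ 2 ≤ ‖u‖ ^ 2 := by
  simpa only [Real.norm_eq_abs, sq_abs, real_inner_comm] using hb.sum_inner_products_le u

lemma summable_coordNorm (u : H) :
    Summable fun j : ℕ => (1 / 2 : ℝ) ^ (j + 1) * |⟪u, b j⟫| :=
  Summable.of_nonneg_of_le (fun _ => by positivity)
    (fun j => mul_le_mul_of_nonneg_left (hb.abs_inner_le_norm u j) (by positivity))
    (summable_half_pow_succ.mul_right ‖u‖)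

lemma half_pow_mul_abs_inner_le_coordNorm (u : H) (j : ℕ) :
    (1 / 2 : ℝ) ^ (j + 1) * |⟪u, b j⟫| ≤ coordNorm b u :=
  (hb.summable_coordNorm u).le_tsum j fun _ _ => by positivity

lemma continuous_inner_topOfNormFun (j : ℕ) :
    Continuous[topOfNormFun (coordNorm b), _] fun v => ⟪v, b j⟫ := by
  let := topOfNormFun (coordNorm b)
  refine continuous_iff_continuousAt.2 fun v => Metric.tendsto_nhds.2 fun ε hε => ?_
  have hδ : 0 < (1 / 2 : ℝ) ^ (j + 1) * ε := by positivity
  filter_upwards [(isOpen_topOfNormFun_ball v hδ).mem_nhds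
    (by simpa only [Set.mem_ofPred_eq, sub_self, coordNorm_zero] using hδ)] with w hw
  rw [Real.dist_eq, ← inner_sub_left]
  exact lt_of_mul_lt_mul_left ((hb.half_pow_mul_abs_inner_le_coordNorm _ j).trans_lt hw)
    (by positivity)

lemma coordNorm_add_le (x y : H) : coordNorm b (x + y) ≤ coordNorm b x + coordNorm b y := by
  rw [coordNorm, coordNorm, coordNorm,
    ← (hb.summable_coordNorm x).tsum_add (hb.summable_coordNorm y)]
  refine (hb.summable_coordNorm _).tsum_le_tsum (fun j => ?_)
    ((hb.summable_coordNorm x).add (hb.summable_coordNorm y))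
  rw [← mul_add, inner_add_left]
  exact mul_le_mul_of_nonneg_left (abs_add_le _ _) (by positivity)

lemma coordNorm_le_sum_range_add (u : H) (n : ℕ) :
    coordNorm b u ≤ ∑ j ∈ Finset.range n, (1 / 2 : ℝ) ^ (j + 1) * |⟪u, b j⟫|
      + (1 / 2 : ℝ) ^ n * ‖u‖ := by
  rw [coordNorm, ← (hb.summable_coordNorm u).sum_add_tsum_nat_add n]
  gcongr
  calc ∑' j : ℕ, (1 / 2 : ℝ) ^ (j + n + 1) * |⟪u, b (j + n)⟫|
      ≤ ∑' j : ℕ, (1 / 2 : ℝ) ^ (j + 1) * ((1 / 2 : ℝ) ^ n * ‖u‖) := by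
        refine ((summable_nat_add_iff n).2 (hb.summable_coordNorm u)).tsum_le_tsum (fun j => ?_)
          (summable_half_pow_succ.mul_right _)
        rw [show (1 / 2 : ℝ) ^ (j + n + 1) = (1 / 2) ^ (j + 1) * (1 / 2) ^ n by ring, mul_assoc]
        gcongr
        exact hb.abs_inner_le_norm u _
    _ = (1 / 2 : ℝ) ^ n * ‖u‖ := by rw [tsum_mul_right, tsum_half_pow_succ, one_mul]

lemma eventually_coordNorm_sub_lt {F : Filter H} {u : H} {M : ℝ} (hFM : ∀ᶠ v in F, ‖v‖ ≤ M)
    (hF : ∀ j, Tendsto (fun v => ⟪v, b j⟫) F (𝓝 ⟪u, b j⟫)) {ε : ℝ} (hε : 0 < ε) :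
    ∀ᶠ v in F, coordNorm b (v - u) < ε := by
  obtain ⟨n, hn⟩ : ∃ n : ℕ, (1 / 2 : ℝ) ^ n * (M + ‖u‖) < ε / 2 :=
    ((tendsto_pow_atTop_nhds_zero_of_lt_one (by norm_num) (by norm_num : (1 / 2 : ℝ) < 1)
      |>.mul_const (M + ‖u‖)).eventually (gt_mem_nhds (by simpa using half_pos hε))).exists
  have hhead : Tendsto (fun v => ∑ j ∈ Finset.range n, (1 / 2 : ℝ) ^ (j + 1) * |⟪v - u, b j⟫|)
      F (𝓝 0) := by
    simpa [inner_sub_left] using tendsto_finsetSum (Finset.range n) fun j _ =>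
      (((hF j).sub_const ⟪u, b j⟫).abs).const_mul ((1 / 2 : ℝ) ^ (j + 1))
  filter_upwards [hFM, hhead.eventually_lt_const (half_pos hε)] with v hvM hv
  have htail : (1 / 2 : ℝ) ^ n * ‖v - u‖ ≤ (1 / 2 : ℝ) ^ n * (M + ‖u‖) := by
    gcongr
    exact (norm_sub_le v u).trans (by linarith)
  linarith [hb.coordNorm_le_sum_range_add (v - u) n]

lemma sum_sq_le_of_tendsto_inner {F : Filter H} [F.NeBot] {M : ℝ} (hFM : ∀ᶠ v in F, ‖v‖ ≤ M)
    {c : ℕ → ℝ} (hc : ∀ j, Tendsto (fun v => ⟪v, b j⟫) F (𝓝 (c j))) (s : Finset ℕ) :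
    ∑ j ∈ s, c j ^ 2 ≤ M ^ 2 := by
  refine le_of_tendsto (tendsto_finsetSum s fun j _ => (hc j).pow 2) ?_
  filter_upwards [hFM] with v hv
  exact (hb.sum_sq_inner_le v s).trans (pow_le_pow_left₀ (norm_nonneg v) hv 2)

variable [CompleteSpace H] (hb_total : (Submodule.span ℝ (Set.range b)).topologicalClosure = ⊤)
include hb_total

lemma exists_inner_eq_of_sum_sq_le {c : ℕ → ℝ} {C : ℝ}
    (hc : ∀ s : Finset ℕ, ∑ j ∈ s, c j ^ 2 ≤ C) : ∃ u : H, ∀ j, ⟪u, b j⟫ = c j := by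
  have hc2 : Memℓp c 2 := memℓp_gen' (C := C) fun s => by simpa using hc s
  let B := HilbertBasis.mk hb hb_total.ge
  refine ⟨B.repr.symm ⟨c, hc2⟩, fun j => ?_⟩
  rw [real_inner_comm, ← HilbertBasis.coe_mk hb hb_total.ge, ← B.repr_apply_apply]
  simp

lemma norm_sq_le_of_sum_sq_inner_le {u : H} {C : ℝ}
    (hu : ∀ s : Finset ℕ, ∑ j ∈ s, ⟪u, b j⟫ ^ 2 ≤ C) : ‖u‖ ^ 2 ≤ C := by
  have hsum := (HilbertBasis.mk hb hb_total.ge).hasSum_inner_mul_inner u u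
  simp only [HilbertBasis.coe_mk, real_inner_comm u, ← sq, real_inner_self_eq_norm_sq] at hsum
  exact hasSum_le_of_sum_le hsum hu

lemma isBounded_closure_topOfNormFun {S : Set H} (hS : Bornology.IsBounded S) :
    Bornology.IsBounded (closure[topOfNormFun (coordNorm b)] S) := by
  let := topOfNormFun (coordNorm b)
  obtain ⟨M, hM⟩ := hS.exists_norm_le
  let T : Set H := {u | ∀ s : Finset ℕ, ∑ j ∈ s, ⟪u, b j⟫ ^ 2 ≤ M ^ 2}
  have hT_closed : IsClosed T := by
    simp only [T, Set.ofPred_forall]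
    exact isClosed_iInter fun s => isClosed_le
      (continuous_finsetSum s fun j _ => (hb.continuous_inner_topOfNormFun j).pow 2)
      continuous_const
  have hST : S ⊆ T := fun u hu s =>
    (hb.sum_sq_inner_le u s).trans (pow_le_pow_left₀ (norm_nonneg u) (hM u hu) 2)
  refine isBounded_iff_forall_norm_le.2 ⟨|M|, fun u hu => ?_⟩
  have huT : u ∈ T := closure_minimal hST hT_closed hu
  have hu := hb.norm_sq_le_of_sum_sq_inner_le hb_total huT
  simpa using sq_le_sq.1 hu

lemma coordNorm_pos {v : H} (hv : v ≠ 0) : 0 < coordNorm b v := by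
  refine (coordNorm_nonneg v).lt_of_ne' fun h0 => hv ?_
  have hcoord : ∀ j, ⟪b j, v⟫ = 0 := fun j => by
    have h := hb.half_pow_mul_abs_inner_le_coordNorm v j
    rw [h0] at h
    rw [real_inner_comm, ← abs_eq_zero]
    exact le_antisymm (nonpos_of_mul_nonpos_right h (by positivity)) (abs_nonneg _)
  let B := HilbertBasis.mk hb hb_total.ge
  refine B.repr.map_eq_zero_iff.1 (lp.ext (funext fun j => ?_))
  simp [B, HilbertBasis.repr_apply_apply, hcoord]

theorem isCompact_topOfNormFun_of_isBounded {S : Set H} (hS : Bornology.IsBounded S)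
    (hS_closed : IsClosed[topOfNormFun (coordNorm b)] S) :
    @IsCompact H (topOfNormFun (coordNorm b)) S := by
  let := topOfNormFun (coordNorm b)
  obtain ⟨M, hM⟩ := hS.exists_norm_le
  rw [isCompact_iff_ultrafilter_le_nhds]
  intro F hFS
  have hFM : ∀ᶠ v in (F : Filter H), ‖v‖ ≤ M := mem_of_superset (le_principal_iff.1 hFS) hM
  choose c hc using fun j => F.exists_tendsto_of_eventually_abs_le
    (hFM.mono fun v hv => (hb.abs_inner_le_norm v j).trans hv)
  obtain ⟨u, hu⟩ :=
    hb.exists_inner_eq_of_sum_sq_le hb_total (hb.sum_sq_le_of_tendsto_inner hFM hc)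
  have hFu : (F : Filter H) ≤ 𝓝 u := le_nhds_topOfNormFun hb.coordNorm_add_le
    fun ε hε => hb.eventually_coordNorm_sub_lt hFM (by simpa only [hu] using hc) hε
  exact ⟨u, hS_closed.mem_of_tendsto hFu (le_principal_iff.1 hFS), hFu⟩

end Orthonormal

end CoordNorm

theorem generalized_fountain_stmt_1_general
    {H : Type*} [NormedAddCommGroup H] [InnerProductSpace ℝ H] [CompleteSpace H]
    (b : ℕ → H) (hb : Orthonormal ℝ b)
    (hb_total : (Submodule.span ℝ (Set.range b)).topologicalClosure = ⊤)
    (norm1 : H → ℝ)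
    (hnorm1 : ∀ u : H, norm1 u = ∑' j : ℕ, (1 / 2 : ℝ) ^ (j + 1) * |⟪u, b j⟫|)
    (σ : TopologicalSpace H) (hσ : σ = topOfNormFun norm1)
    (U : Set H) (hU_bdd : Bornology.IsBounded U)
    (f : H → H)
    (hf_cont : @ContinuousOn H H σ σ f (closure U)) :
    IsClosed[σ] {u ∈ closure U | f u = 0} ∧ @IsCompact H σ {u ∈ closure U | f u = 0} := by
  obtain rfl : norm1 = coordNorm b := funext hnorm1
  subst hσ
  let := topOfNormFun (coordNorm b)
  -- `σ` is a local instance in the statement, so `closure U` there is the `σ`-closure.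
  have hS_closed : IsClosed (closure U ∩ f ⁻¹' {0}) :=
    hf_cont.preimage_isClosed_of_isClosed isClosed_closure
      (isClosed_singleton_zero_topOfNormFun coordNorm_zero coordNorm_neg
        fun _ => hb.coordNorm_pos hb_total)
  have hS_bdd : Bornology.IsBounded (closure U ∩ f ⁻¹' {0}) :=
    (hb.isBounded_closure_topOfNormFun hb_total hU_bdd).subset Set.inter_subset_left
  exact ⟨hS_closed, hb.isCompact_topOfNormFun_of_isBounded hb_total hS_bdd hS_closed⟩

/-- If `U` is open and bounded with `σ`-closed closure and
`f : Ū → H` is a `σ`-admissible map with `0 ∉ f(∂U)`, then `f⁻¹(0)` is `σ`-closed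
and `σ`-compact. -/
theorem generalized_fountain_stmt_1
    {H : Type*} [NormedAddCommGroup H] [InnerProductSpace ℝ H] [CompleteSpace H]
    [TopologicalSpace.SeparableSpace H]
    (b : ℕ → H) (hb : Orthonormal ℝ b)
    (hb_total : (Submodule.span ℝ (Set.range b)).topologicalClosure = ⊤)
    (norm1 : H → ℝ)
    (hnorm1 : ∀ u : H, norm1 u = ∑' j : ℕ, (1 / 2 : ℝ) ^ (j + 1) * |⟪u, b j⟫|)
    (σ : TopologicalSpace H) (hσ : σ = topOfNormFun norm1)
    (U : Set H) (hU_open : IsOpen U) (hU_bdd : Bornology.IsBounded U)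
    (hU_closed : IsClosed[σ] (closure U))
    (f : H → H)
    (hf_cont : @ContinuousOn H H σ σ f (closure U))
    (hf_fin : ∀ u ∈ U, ∃ N : Set H, N ∈ @nhds H σ u ∧
      ∃ F : Submodule ℝ H, FiniteDimensional ℝ F ∧ ∀ v ∈ N ∩ U, v - f v ∈ (F : Set H))
    (hf_bdry : ∀ u ∈ frontier U, f u ≠ 0) :
    IsClosed[σ] {u ∈ closure U | f u = 0} ∧ @IsCompact H σ {u ∈ closure U | f u = 0} :=
  generalized_fountain_stmt_1_general b hb hb_total norm1 hnorm1 σ hσ U hU_bdd f hf_cont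
end

section
/- For every k ≥ 2 and every u ∈ Y_k one has |||u|||_k ≤ (3/2)|||u||| and |||u||| ≤ 2^{k+1} |||u|||_k; hence the norms |||·||| and |||·|||_k are equivalent on Y_k. Moreover, for every k the orthogonal projection P_k : X → Y_k is τ-continuous. -/
open scoped RealInnerProductSpace
open Filter Topology

/-!
On `Y_k = Y ⊕ span {e₀, …, e_k}` the projection `P_k` is the identity and `Q_{k+1}` vanishes, so
`|||u|||_k = A + 2^{-(k+1)} S` with `S = ∑ⱼ 2^{-(j+1)} |(u, θⱼ)|` and
`A = ∑_{j ≤ k} 2^{-(j+1)} |(u, eⱼ)|`, while `|||u||| = max S ‖Qu‖`. As `Qu` lies in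
`span {e₀, …, e_k}`, `A ≤ ‖Qu‖ ≤ 2^{k+1} A`, which gives both inequalities. For continuity:
`|||·|||` is subadditive and `|||P_k u||| ≤ |||u|||`, because `P P_k = P` and
`P_k u - P u = P_k (Q u)`; an additive map with this property is continuous for the ball
topologies.
-/

open Finset

theorem continuous_topOfNormFun {H H' F : Type*} [AddCommGroup H] [AddCommGroup H']
    [FunLike F H H'] [AddMonoidHomClass F H H'] {N : H → ℝ} {N' : H' → ℝ}
    (hN : N 0 = 0) (hN' : ∀ a b, N' (a + b) ≤ N' a + N' b) (f : F)
    (hf : ∀ w, N' (f w) ≤ N w) :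
    Continuous[topOfNormFun N, topOfNormFun N'] f := by
  let := topOfNormFun N
  refine continuous_generateFrom_iff.2 ?_
  rintro _ ⟨u, ε, -, rfl⟩
  refine isOpen_iff_forall_mem_open.2 fun w₀ (hw₀ : N' (f w₀ - u) < ε) => ?_
  refine ⟨{w | N (w - w₀) < ε - N' (f w₀ - u)}, fun w (hw : N (w - w₀) < _) => ?_,
    TopologicalSpace.isOpen_generateFrom_of_mem ⟨w₀, _, by linarith, rfl⟩, ?_⟩
  · show N' (f w - u) < ε
    have htri := hN' (f w - f w₀) (f w₀ - u)
    have hf' := hf (w - w₀)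
    rw [sub_add_sub_cancel] at htri
    rw [map_sub] at hf'
    linarith
  · show N (w₀ - w₀) < _
    rw [sub_self, hN]
    linarith

theorem sum_le_two_pow_mul_sum_half_pow_mul {a : ℕ → ℝ} (ha : ∀ j, 0 ≤ a j) (n : ℕ) :
    ∑ j ∈ range n, a j ≤ 2 ^ n * ∑ j ∈ range n, (1 / 2 : ℝ) ^ (j + 1) * a j := by
  rw [mul_sum]
  refine sum_le_sum fun j hj => ?_
  have hjn : j + 1 ≤ n := mem_range.1 hj
  have : (1 : ℝ) ≤ 2 ^ n * (1 / 2) ^ (j + 1) := by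
    rw [one_div_pow, mul_one_div, one_le_div (by positivity)]
    exact pow_le_pow_right₀ one_le_two hjn
  nlinarith [ha j]

theorem sum_half_pow_mul_le {a : ℕ → ℝ} {M : ℝ} (ha : ∀ j, 0 ≤ a j) (haM : ∀ j, a j ≤ M)
    (n : ℕ) : ∑ j ∈ range n, (1 / 2 : ℝ) ^ (j + 1) * a j ≤ M := by
  have hM : 0 ≤ M := (ha 0).trans (haM 0)
  calc ∑ j ∈ range n, (1 / 2 : ℝ) ^ (j + 1) * a j
      ≤ ∑ j ∈ range n, (1 / 2 : ℝ) ^ (j + 1) * M :=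
        sum_le_sum fun j _ => mul_le_mul_of_nonneg_left (haM j) (by positivity)
    _ = (1 / 2 * ∑ j ∈ range n, (1 / 2 : ℝ) ^ j) * M := by
        rw [← sum_mul, mul_sum]; simp only [pow_succ']
    _ ≤ 1 * M := by gcongr; linarith [sum_geometric_two_le n]
    _ = M := one_mul M

theorem tsum_half_pow_mul_eq_sum_add {a : ℕ → ℝ}
    (ha : Summable fun j => (1 / 2 : ℝ) ^ (j + 1) * a j) (n : ℕ) :
    ∑' j, (1 / 2 : ℝ) ^ (j + 1) * a j = ∑ j ∈ range n, (1 / 2 : ℝ) ^ (j + 1) * a j +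
      (1 / 2 : ℝ) ^ n * ∑' j, (1 / 2 : ℝ) ^ (j + 1) * a (j + n) := by
  rw [← ha.sum_add_tsum_nat_add n, ← tsum_mul_left]
  congr 2 with j
  ring

theorem add_half_pow_mul_le_and_max_le {A S Z : ℝ} (n : ℕ) (hA : 0 ≤ A) (hS : 0 ≤ S)
    (hAZ : A ≤ Z) (hZA : Z ≤ 2 ^ (n + 1) * A) :
    A + (1 / 2) ^ (n + 1) * S ≤ 3 / 2 * max S Z ∧
      max S Z ≤ 2 ^ (n + 1) * (A + (1 / 2) ^ (n + 1) * S) := by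
  have hpow : (1 / 2 : ℝ) ^ (n + 1) ≤ 1 / 2 := by
    simpa using pow_le_pow_of_le_one (by norm_num : (0 : ℝ) ≤ 1 / 2) (by norm_num)
      (Nat.le_add_left 1 n)
  have hexp : (2 : ℝ) ^ (n + 1) * (A + (1 / 2) ^ (n + 1) * S) = 2 ^ (n + 1) * A + S := by
    rw [mul_add, ← mul_assoc, ← mul_pow]; norm_num
  refine ⟨?_, hexp ▸ max_le (by nlinarith [pow_pos (two_pos : (0 : ℝ) < 2) (n + 1)]) (by linarith)⟩
  nlinarith [le_max_left S Z, le_max_right S Z]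

section

variable {X : Type*} [NormedAddCommGroup X] [InnerProductSpace ℝ X]

theorem Orthonormal.norm_le_sum_abs_inner_of_mem_span {ι : Type*} {e : ι → X}
    (he : Orthonormal ℝ e) {s : Finset ι} {z : X} (hz : z ∈ Submodule.span ℝ (e '' s)) :
    ‖z‖ ≤ ∑ i ∈ s, |⟪z, e i⟫| := by
  obtain ⟨c, rfl⟩ := (Submodule.mem_span_image_finset_iff_exists_fun' ℝ).1 hz
  refine (norm_sum_le _ _).trans (sum_le_sum fun i hi => ?_)
  rw [real_inner_comm, he.inner_right_sum c hi, norm_smul, he.norm_eq_one, mul_one,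
    Real.norm_eq_abs]

theorem abs_inner_le_norm_of_norm_le_one {v w : X} (hw : ‖w‖ ≤ 1) : |⟪v, w⟫| ≤ ‖v‖ :=
  (abs_real_inner_le_norm v w).trans (mul_le_of_le_one_right (norm_nonneg v) hw)

/-- The coefficient part of the norms `|||·|||` (with `f = θ`) and `|||·|||_k` (with `f = e'`). -/
noncomputable def weightedCoeffSum (f : ℕ → X) (v : X) : ℝ :=
  ∑' j, (1 / 2 : ℝ) ^ (j + 1) * |⟪v, f j⟫|

section weightedCoeffSum

variable {f : ℕ → X}

theorem weightedCoeffSum_nonneg (v : X) : 0 ≤ weightedCoeffSum f v :=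
  tsum_nonneg fun _ => by positivity

theorem summable_half_pow_mul_abs_inner (hf : ∀ j, ‖f j‖ ≤ 1) (v : X) :
    Summable fun j => (1 / 2 : ℝ) ^ (j + 1) * |⟪v, f j⟫| := by
  refine (((summable_nat_add_iff 1).2 summable_geometric_two).mul_right ‖v‖).of_nonneg_of_le
    (fun _ => by positivity) fun j => ?_
  exact mul_le_mul_of_nonneg_left (abs_inner_le_norm_of_norm_le_one (hf j)) (by positivity)

theorem weightedCoeffSum_add_le (hf : ∀ j, ‖f j‖ ≤ 1) (a b : X) :
    weightedCoeffSum f (a + b) ≤ weightedCoeffSum f a + weightedCoeffSum f b := by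
  rw [weightedCoeffSum, weightedCoeffSum, weightedCoeffSum,
    ← (summable_half_pow_mul_abs_inner hf a).tsum_add (summable_half_pow_mul_abs_inner hf b)]
  refine (summable_half_pow_mul_abs_inner hf _).tsum_le_tsum (fun j => ?_)
    ((summable_half_pow_mul_abs_inner hf a).add (summable_half_pow_mul_abs_inner hf b))
  rw [inner_add_left, ← mul_add]
  exact mul_le_mul_of_nonneg_left (abs_add_le _ _) (by positivity)

theorem weightedCoeffSum_starProjection (K : Submodule ℝ X) [K.HasOrthogonalProjection]
    (hf : ∀ j, f j ∈ K) (v : X) :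
    weightedCoeffSum f (K.starProjection v) = weightedCoeffSum f v := by
  simp only [weightedCoeffSum, K.inner_starProjection_left_eq_right,
    K.starProjection_eq_self_iff.2 (hf _)]

end weightedCoeffSum

/-- The norm `|||·|||`, with `P = K.starProjection` and `Q = 1 - P`. -/
noncomputable def tripleNorm (K : Submodule ℝ X) [K.HasOrthogonalProjection] (θ : ℕ → X)
    (u : X) : ℝ :=
  max (weightedCoeffSum θ (K.starProjection u)) ‖u - K.starProjection u‖

section tripleNorm

variable (K : Submodule ℝ X) [K.HasOrthogonalProjection] {θ : ℕ → X}

theorem tripleNorm_zero : tripleNorm K θ 0 = 0 := by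
  simp [tripleNorm, weightedCoeffSum]

theorem tripleNorm_add_le (hθ : ∀ j, ‖θ j‖ ≤ 1) (a b : X) :
    tripleNorm K θ (a + b) ≤ tripleNorm K θ a + tripleNorm K θ b := by
  simp only [tripleNorm, map_add]
  refine max_le ((weightedCoeffSum_add_le hθ _ _).trans
    (add_le_add (le_max_left _ _) (le_max_left _ _))) ?_
  rw [add_sub_add_comm]
  exact (norm_add_le _ _).trans (add_le_add (le_max_right _ _) (le_max_right _ _))

theorem tripleNorm_starProjection_le {L : Submodule ℝ X} [L.HasOrthogonalProjection]
    (hKL : K ≤ L) (u : X) : tripleNorm K θ (L.starProjection u) ≤ tripleNorm K θ u := by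
  have hKL' : K.starProjection (L.starProjection u) = K.starProjection u := by
    rw [← ContinuousLinearMap.comp_apply, K.starProjection_comp_starProjection_of_le hKL]
  have hsub :
      L.starProjection u - K.starProjection u = L.starProjection (u - K.starProjection u) := by
    rw [map_sub, L.starProjection_eq_self_iff.2 (hKL (K.starProjection_apply_mem u))]
  rw [tripleNorm, tripleNorm, hKL', hsub]
  exact max_le_max le_rfl (L.norm_starProjection_apply_le _)

end tripleNorm

theorem Submodule.eq_starProjection_of_forall (K : Submodule ℝ X) [K.HasOrthogonalProjection]
    {p : X → X} (hp : ∀ u, p u ∈ K ∧ u - p u ∈ Kᗮ) : p = K.starProjection :=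
  funext fun u => (K.eq_starProjection_of_mem_orthogonal (hp u).1 (hp u).2).symm

theorem Submodule.sub_starProjection_mem_of_mem_sup (K : Submodule ℝ X)
    [K.HasOrthogonalProjection] {S : Submodule ℝ X} (hS : S ≤ Kᗮ) {u : X} (hu : u ∈ K ⊔ S) :
    u - K.starProjection u ∈ S := by
  obtain ⟨y, hy, z, hz, rfl⟩ := Submodule.mem_sup.1 hu
  rwa [K.eq_starProjection_of_mem_orthogonal' hy (hS hz) rfl, add_sub_cancel_left]

theorem Orthonormal.isOrtho_span_image {ι : Type*} {e : ι → X} (he : Orthonormal ℝ e)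
    {s t : Set ι} (hst : Disjoint s t) :
    Submodule.span ℝ (e '' s) ⟂ Submodule.span ℝ (e '' t) := by
  rw [Submodule.isOrtho_span]
  rintro _ ⟨i, hi, rfl⟩ _ ⟨j, hj, rfl⟩
  exact he.inner_eq_zero (hst.ne_of_mem hi hj)

theorem Orthonormal.sup_span_image_le_orthogonal_closure {ι : Type*} {e : ι → X}
    (he : Orthonormal ℝ e) {Y : Submodule ℝ X} (heY : ∀ i, e i ∈ Yᗮ) {s t : Set ι}
    (hst : Disjoint s t) :
    Y ⊔ Submodule.span ℝ (e '' s) ≤ (Submodule.span ℝ (e '' t)).topologicalClosureᗮ := by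
  rw [Submodule.orthogonal_closure, ← Submodule.isOrtho_iff_le, Submodule.isOrtho_sup_left]
  exact ⟨(Submodule.isOrtho_iff_le.2 (Submodule.span_le.2
    (Set.image_subset_iff.2 fun i _ => heY i))).symm, he.isOrtho_span_image hst⟩

theorem weightedCoeffSum_eq_sum_add {θ e e' : ℕ → X} (hθ : ∀ j, ‖θ j‖ ≤ 1)
    (he : ∀ j, ‖e j‖ ≤ 1) {k : ℕ} (he' : ∀ j, e' j = if j ≤ k then e j else θ (j - k - 1))
    (u : X) : weightedCoeffSum e' u = ∑ j ∈ range (k + 1), (1 / 2 : ℝ) ^ (j + 1) * |⟪u, e j⟫| +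
      (1 / 2 : ℝ) ^ (k + 1) * weightedCoeffSum θ u := by
  have he'1 : ∀ j, ‖e' j‖ ≤ 1 := fun j => by rw [he']; split_ifs <;> simp [*]
  rw [weightedCoeffSum, tsum_half_pow_mul_eq_sum_add (summable_half_pow_mul_abs_inner he'1 u)]
  congr 1
  · exact sum_congr rfl fun j hj => by
      rw [he', if_pos (Nat.lt_succ_iff.1 (mem_range.1 hj))]
  · simp only [weightedCoeffSum, he', show ∀ j, ¬ j + (k + 1) ≤ k by omega,
      show ∀ j, j + (k + 1) - k - 1 = j by omega, if_false]

theorem weightedCoeffSum_le_and_le_tripleNorm (Y : Submodule ℝ X) [Y.HasOrthogonalProjection]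
    {θ e e' : ℕ → X} (hθY : ∀ j, θ j ∈ Y) (hθ : ∀ j, ‖θ j‖ ≤ 1) (he : Orthonormal ℝ e)
    (heY : ∀ j, e j ∈ Yᗮ) {k : ℕ} (he' : ∀ j, e' j = if j ≤ k then e j else θ (j - k - 1))
    {u : X} (hu : u ∈ Y ⊔ Submodule.span ℝ (e '' Set.Iic k)) :
    weightedCoeffSum e' u ≤ 3 / 2 * tripleNorm Y θ u ∧
      tripleNorm Y θ u ≤ 2 ^ (k + 1) * weightedCoeffSum e' u := by
  set z := u - Y.starProjection u
  have hz : z ∈ Submodule.span ℝ (e '' ↑(range (k + 1))) := by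
    rw [Nat.range_succ_eq_Iic, Finset.coe_Iic]
    refine Y.sub_starProjection_mem_of_mem_sup ?_ hu
    exact Submodule.span_le.2 (Set.image_subset_iff.2 fun j _ => heY j)
  have hinner : ∀ j, ⟪u, e j⟫ = ⟪z, e j⟫ := fun j => by
    rw [inner_sub_left, Submodule.inner_right_of_mem_orthogonal (Y.starProjection_apply_mem u)
      (heY j), sub_zero]
  rw [weightedCoeffSum_eq_sum_add hθ (fun j => (he.norm_eq_one j).le) he', tripleNorm,
    weightedCoeffSum_starProjection Y hθY]
  simp only [hinner]
  exact add_half_pow_mul_le_and_max_le k (sum_nonneg fun _ _ => by positivity)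
    (weightedCoeffSum_nonneg u)
    (sum_half_pow_mul_le (fun _ => abs_nonneg _)
      (fun j => abs_inner_le_norm_of_norm_le_one (he.norm_eq_one j).le) _)
    ((he.norm_le_sum_abs_inner_of_mem_span hz).trans
      (sum_le_two_pow_mul_sum_half_pow_mul (fun _ => abs_nonneg _) _))

theorem continuous_starProjection_tripleNorm {K L : Submodule ℝ X} [K.HasOrthogonalProjection]
    [L.HasOrthogonalProjection] (hKL : K ≤ L) {θ : ℕ → X} (hθ : ∀ j, ‖θ j‖ ≤ 1) :
    Continuous[topOfNormFun (tripleNorm K θ), topOfNormFun (tripleNorm K θ)] L.starProjection :=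
  continuous_topOfNormFun (tripleNorm_zero K) (tripleNorm_add_le K hθ) L.starProjection
    (tripleNorm_starProjection_le K hKL)

end

theorem generalized_fountain_stmt_6_general
    {X : Type*} [NormedAddCommGroup X] [InnerProductSpace ℝ X]
    (Y : Submodule ℝ X)
    (θ : ℕ → X) (hθ : Orthonormal ℝ θ)
    (hθ_span : (Submodule.span ℝ (Set.range θ)).topologicalClosure = Y)
    -- (e j) is an orthonormal basis of Z := Y^⊥
    (e : ℕ → X) (he : Orthonormal ℝ e)
    (he_span : (Submodule.span ℝ (Set.range e)).topologicalClosure = Yᗮ)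
    (k : ℕ)
    -- Y_k = Y ⊕ (⊕_{j=0}^k ℝ e_j),  Z_{k+1} = closure(⊕_{j=k+1}^∞ ℝ e_j)
    (Yk Zk1 : Submodule ℝ X)
    (hYk : Yk = Y ⊔ Submodule.span ℝ (e '' Set.Iic k))
    (hZk1 : Zk1 = (Submodule.span ℝ (e '' Set.Ici (k + 1))).topologicalClosure)
    (P Q : X → X)
    (hP : ∀ u : X, P u ∈ Y ∧ u - P u ∈ Yᗮ)
    (hQ : ∀ u : X, Q u = u - P u)
    -- orthogonal projections P_k onto Y_k and Q_{k+1} onto Z_{k+1}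
    (Pk Qk1 : X → X)
    (hPk : ∀ u : X, Pk u ∈ Yk ∧ u - Pk u ∈ Ykᗮ)
    (hQk1 : ∀ u : X, Qk1 u ∈ Zk1 ∧ u - Qk1 u ∈ Zk1ᗮ)
    -- the sequence e'
    (e' : ℕ → X)
    (he' : ∀ j : ℕ, e' j = if j ≤ k then e j else θ (j - k - 1))
    (tnorm : X → ℝ)
    (htnorm : ∀ u : X,
      tnorm u = max (∑' j : ℕ, (1 / 2 : ℝ) ^ (j + 1) * |⟪P u, θ j⟫|) ‖Q u‖)
    (tnormk : X → ℝ)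
    (htnormk : ∀ u : X,
      tnormk u = max (∑' j : ℕ, (1 / 2 : ℝ) ^ (j + 1) * |⟪Pk u, e' j⟫|) ‖Qk1 u‖)
    (τ : TopologicalSpace X) (hτ : τ = topOfNormFun tnorm) :
    (∀ u : X, u ∈ Yk →
      tnormk u ≤ (3 / 2 : ℝ) * tnorm u ∧ tnorm u ≤ (2 : ℝ) ^ (k + 1) * tnormk u) ∧
      Continuous[τ, τ] Pk := by
  -- until substituted, the binder `τ` is a local instance that overrides the norm topology
  subst hτ
  have hθY (j : ℕ) : θ j ∈ Y := hθ_span ▸ Submodule.le_topologicalClosure _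
    (Submodule.subset_span (Set.mem_range_self j))
  have heY (j : ℕ) : e j ∈ Yᗮ := he_span ▸ Submodule.le_topologicalClosure _
    (Submodule.subset_span (Set.mem_range_self j))
  have : Y.HasOrthogonalProjection := ⟨fun u => ⟨P u, hP u⟩⟩
  have : Yk.HasOrthogonalProjection := ⟨fun u => ⟨Pk u, hPk u⟩⟩
  have : Zk1.HasOrthogonalProjection := ⟨fun u => ⟨Qk1 u, hQk1 u⟩⟩
  obtain rfl := Y.eq_starProjection_of_forall hP
  obtain rfl := Yk.eq_starProjection_of_forall hPk
  obtain rfl := Zk1.eq_starProjection_of_forall hQk1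
  obtain rfl : tnorm = tripleNorm Y θ := funext fun u => by rw [htnorm, hQ]; rfl
  have hYkZk1 : Yk ≤ Zk1ᗮ := hYk ▸ hZk1 ▸
    he.sup_span_image_le_orthogonal_closure heY (Set.Iic_disjoint_Ici.2 (by omega))
  refine ⟨fun u hu => ?_, continuous_starProjection_tripleNorm (hYk ▸ le_sup_left)
    fun j => (hθ.norm_eq_one j).le⟩
  have htnormk_u : tnormk u = weightedCoeffSum e' u := by
    rw [htnormk, Yk.starProjection_eq_self_iff.2 hu,
      Zk1.starProjection_apply_eq_zero_iff.2 (hYkZk1 hu), norm_zero]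
    exact max_eq_left (weightedCoeffSum_nonneg u)
  rw [htnormk_u]
  exact weightedCoeffSum_le_and_le_tripleNorm Y hθY (fun j => (hθ.norm_eq_one j).le) he heY he'
    (hYk ▸ hu)

/-- On `Y_k` one has `|||u|||_k ≤ (3/2)|||u|||` and
`|||u||| ≤ 2^(k+1) |||u|||_k`, so the two norms are equivalent on `Y_k`; moreover the
orthogonal projection `P_k : X → Y_k` is `τ`-continuous. -/
theorem generalized_fountain_stmt_6
    {X : Type*} [NormedAddCommGroup X] [InnerProductSpace ℝ X] [CompleteSpace X]
    (Y : Submodule ℝ X) (hY_closed : IsClosed (Y : Set X))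
    (θ : ℕ → X) (hθ : Orthonormal ℝ θ)
    (hθ_span : (Submodule.span ℝ (Set.range θ)).topologicalClosure = Y)
    -- (e j) is an orthonormal basis of Z := Y^⊥
    (e : ℕ → X) (he : Orthonormal ℝ e)
    (he_span : (Submodule.span ℝ (Set.range e)).topologicalClosure = Yᗮ)
    (k : ℕ) (hk : 2 ≤ k)
    -- Y_k = Y ⊕ (⊕_{j=0}^k ℝ e_j),  Z_{k+1} = closure(⊕_{j=k+1}^∞ ℝ e_j)
    (Yk Zk1 : Submodule ℝ X)
    (hYk : Yk = Y ⊔ Submodule.span ℝ (e '' Set.Iic k))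
    (hZk1 : Zk1 = (Submodule.span ℝ (e '' Set.Ici (k + 1))).topologicalClosure)
    (P Q : X → X)
    (hP : ∀ u : X, P u ∈ Y ∧ u - P u ∈ Yᗮ)
    (hQ : ∀ u : X, Q u = u - P u)
    -- orthogonal projections P_k onto Y_k and Q_{k+1} onto Z_{k+1}
    (Pk Qk1 : X → X)
    (hPk : ∀ u : X, Pk u ∈ Yk ∧ u - Pk u ∈ Ykᗮ)
    (hQk1 : ∀ u : X, Qk1 u ∈ Zk1 ∧ u - Qk1 u ∈ Zk1ᗮ)
    -- the sequence e'
    (e' : ℕ → X)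
    (he' : ∀ j : ℕ, e' j = if j ≤ k then e j else θ (j - k - 1))
    (tnorm : X → ℝ)
    (htnorm : ∀ u : X,
      tnorm u = max (∑' j : ℕ, (1 / 2 : ℝ) ^ (j + 1) * |⟪P u, θ j⟫|) ‖Q u‖)
    (tnormk : X → ℝ)
    (htnormk : ∀ u : X,
      tnormk u = max (∑' j : ℕ, (1 / 2 : ℝ) ^ (j + 1) * |⟪Pk u, e' j⟫|) ‖Qk1 u‖)
    (τ : TopologicalSpace X) (hτ : τ = topOfNormFun tnorm) :
    (∀ u : X, u ∈ Yk →
      tnormk u ≤ (3 / 2 : ℝ) * tnorm u ∧ tnorm u ≤ (2 : ℝ) ^ (k + 1) * tnormk u) ∧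
      Continuous[τ, τ] Pk :=
  generalized_fountain_stmt_6_general Y θ hθ hθ_span e he he_span k Yk Zk1 hYk hZk1 P Q hP hQ Pk Qk1
    hPk hQk1 e' he' tnorm htnorm tnormk htnormk τ hτ
end

section
/- Brezis–Lieb lemma: Let J : ℂ → ℂ be a continuous function with J(0) = 0 such that for every sufficiently small ε > 0 there exist two continuous nonnegative functions h_ε and g_ε satisfying |J(a+b) − J(a)| ≤ ε h_ε(a) + g_ε(b) for all a, b ∈ ℂ. Let u_n = u + v_n be a sequence of measurable functions from ℝ^N to ℂ such that (i) v_n → 0 almost everywhere, (ii) J(u) ∈ L¹(ℝ^N), (iii) limsup_n ∫_{ℝ^N} h_ε(v_n) dx ≤ C < ∞ for some constant C independent of ε, and (iv) ∫_{ℝ^N} g_ε(u) dx < ∞. Then ∫_{ℝ^N} |J(u + v_n) − J(v_n) − J(u)| dx → 0 as n → ∞. -/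
/-!
Fix `ε`. Pointwise, `|J(u + vₙ) - J(vₙ) - J(u)| ≤ ε hε(vₙ) + (gε(u) + |J(u)|)`, so the positive
part of `|J(u + vₙ) - J(vₙ) - J(u)| - ε hε(vₙ)` is dominated by the integrable `gε(u) + |J(u)|`
and tends to `0` a.e. (since `vₙ → 0` and `J` is continuous with `J 0 = 0`). Dominated
convergence then gives `limsup ∫ |J(u + vₙ) - J(vₙ) - J(u)| ≤ ε C`, and `ε → 0` finishes.
-/

open Filter Topology MeasureTheory
open scoped ENNReal

/-- A variant of dominated convergence: `F n` need not be dominated, only its excess over `H n`. -/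
theorem limsup_lintegral_le_of_le_add_of_tendsto_zero {α : Type*} [MeasurableSpace α]
    {μ : Measure α} {F H : ℕ → α → ℝ≥0∞} {G : α → ℝ≥0∞}
    (hF : ∀ n, AEMeasurable (F n) μ) (hH : ∀ n, AEMeasurable (H n) μ)
    (hG : ∫⁻ x, G x ∂μ ≠ ∞) (hle : ∀ n, F n ≤ᵐ[μ] H n + G)
    (hF_lim : ∀ᵐ x ∂μ, Tendsto (F · x) atTop (𝓝 0)) :
    limsup (fun n => ∫⁻ x, F n x ∂μ) atTop ≤ limsup (fun n => ∫⁻ x, H n x ∂μ) atTop := by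
  have hexcess : Tendsto (fun n => ∫⁻ x, (F n - H n) x ∂μ) atTop (𝓝 0) := by
    have hlim : ∀ᵐ x ∂μ, Tendsto (fun n => (F n - H n) x) atTop (𝓝 0) :=
      hF_lim.mono fun x hx => tendsto_of_tendsto_of_tendsto_of_le_of_le tendsto_const_nhds hx
        (fun _ => zero_le) fun _ => tsub_le_self
    simpa using tendsto_lintegral_of_dominated_convergence' G (fun n => (hF n).sub (hH n))
      (fun n => (hle n).mono fun _ hx => tsub_le_iff_left.2 hx) hG hlim
  calc limsup (fun n => ∫⁻ x, F n x ∂μ) atTop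
      ≤ limsup ((fun n => ∫⁻ x, (F n - H n) x ∂μ) + fun n => ∫⁻ x, H n x ∂μ) atTop := by
        refine limsup_le_limsup (.of_forall fun n => ?_)
        rw [Pi.add_apply, ← lintegral_add_right' _ (hH n)]
        exact lintegral_mono fun _ => le_tsub_add
    _ = limsup (fun n => ∫⁻ x, H n x ∂μ) atTop :=
        ENNReal.limsup_add_of_left_tendsto_zero hexcess _

theorem ofReal_norm_map_add_sub_sub_le {E F : Type*} [AddCommMagma E] [SeminormedAddCommGroup F]
    {J : E → F} {ε s t : ℝ} (hε : 0 ≤ ε) {a b : E}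
    (hJ_le : ‖J (b + a) - J b‖ ≤ ε * s + t) :
    ENNReal.ofReal ‖J (a + b) - J b - J a‖
      ≤ ENNReal.ofReal ε * ENNReal.ofReal s + (ENNReal.ofReal t + ENNReal.ofReal ‖J a‖) := by
  have hnorm : ‖J (a + b) - J b - J a‖ ≤ ε * s + (t + ‖J a‖) := by
    rw [add_comm a b]
    linarith [norm_sub_le (J (b + a) - J b) (J a)]
  calc ENNReal.ofReal ‖J (a + b) - J b - J a‖ ≤ ENNReal.ofReal (ε * s + (t + ‖J a‖)) :=
        ENNReal.ofReal_le_ofReal hnorm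
    _ ≤ _ := by
        rw [← ENNReal.ofReal_mul hε]
        exact ENNReal.ofReal_add_le.trans (by gcongr; exact ENNReal.ofReal_add_le)

theorem limsup_lintegral_norm_map_add_sub_sub_le {α E F : Type*} [MeasurableSpace α]
    {μ : Measure α} [NormedAddCommGroup E] [MeasurableSpace E] [BorelSpace E]
    [SecondCountableTopology E] [NormedAddCommGroup F] {J : E → F} (hJ : Continuous J)
    (hJ0 : J 0 = 0) {ε : ℝ} (hε : 0 ≤ ε) {h g : E → ℝ} (hh : Measurable h) (hg : Measurable g)
    (hJ_le : ∀ a b, ‖J (a + b) - J a‖ ≤ ε * h a + g b)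
    {u : α → E} {v : ℕ → α → E} (hu : Measurable u) (hv : ∀ n, Measurable (v n))
    (hv_lim : ∀ᵐ x ∂μ, Tendsto (v · x) atTop (𝓝 0))
    (hJu : HasFiniteIntegral (fun x => J (u x)) μ)
    (hgu : ∫⁻ x, ENNReal.ofReal (g (u x)) ∂μ ≠ ∞) :
    limsup (fun n => ∫⁻ x, ENNReal.ofReal ‖J (u x + v n x) - J (v n x) - J (u x)‖ ∂μ) atTop
      ≤ ENNReal.ofReal ε * limsup (fun n => ∫⁻ x, ENNReal.ofReal (h (v n x)) ∂μ) atTop := by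
  have hΦ : Continuous fun p : E × E => ENNReal.ofReal ‖J (p.1 + p.2) - J p.2 - J p.1‖ :=
    ENNReal.continuous_ofReal.comp (by fun_prop)
  have hG : ∫⁻ x, ENNReal.ofReal (g (u x)) + ENNReal.ofReal ‖J (u x)‖ ∂μ ≠ ∞ := by
    rw [lintegral_add_left' (by fun_prop)]
    simp_rw [ofReal_norm]
    exact ENNReal.add_ne_top.2 ⟨hgu, hJu.ne⟩
  have hF_lim : ∀ᵐ x ∂μ,
      Tendsto (fun n => ENNReal.ofReal ‖J (u x + v n x) - J (v n x) - J (u x)‖) atTop (𝓝 0) :=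
    hv_lim.mono fun x hx => by
      simpa [Function.comp_def, hJ0] using
        ((hΦ.comp (Continuous.prodMk_right (u x))).tendsto 0).comp hx
  calc _ ≤ limsup (fun n => ∫⁻ x, ENNReal.ofReal ε * ENNReal.ofReal (h (v n x)) ∂μ) atTop :=
        limsup_lintegral_le_of_le_add_of_tendsto_zero
          (fun n => (hΦ.measurable.comp (hu.prodMk (hv n))).aemeasurable)
          (fun n => ((hh.comp (hv n)).ennreal_ofReal.const_mul _).aemeasurable) hG
          (fun n => .of_forall fun x => ofReal_norm_map_add_sub_sub_le hε (hJ_le _ _)) hF_lim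
    _ = _ := by
        simp_rw [lintegral_const_mul' _ _ ENNReal.ofReal_ne_top]
        exact ENNReal.limsup_const_mul_of_ne_top ENNReal.ofReal_ne_top

theorem ENNReal.eq_zero_of_forall_le_ofReal_mul {a C : ℝ≥0∞} (hC : C ≠ ∞) {ε₀ : ℝ} (hε₀ : 0 < ε₀)
    (ha : ∀ ε ∈ Set.Ioo 0 ε₀, a ≤ ENNReal.ofReal ε * C) : a = 0 := by
  have hlim : Tendsto (fun ε : ℝ => ENNReal.ofReal ε * C) (𝓝[>] 0) (𝓝 0) := by
    have hofReal : Tendsto ENNReal.ofReal (𝓝[>] 0) (𝓝 0) := by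
      simpa using (ENNReal.continuous_ofReal.tendsto 0).mono_left nhdsWithin_le_nhds
    simpa using ENNReal.Tendsto.mul_const hofReal (Or.inr hC)
  exact nonpos_iff_eq_zero.1 <| ge_of_tendsto hlim <|
    Filter.mem_of_superset (Ioo_mem_nhdsGT hε₀) ha

/-- **Brezis–Lieb lemma.** -/
theorem generalized_fountain_stmt_11
    (N : ℕ)
    (J : ℂ → ℂ) (hJ_cont : Continuous J) (hJ_zero : J 0 = 0)
    (ε₀ : ℝ) (hε₀ : 0 < ε₀)
    (h g : ℝ → ℂ → ℝ)
    (hhg : ∀ ε : ℝ, ε ∈ Set.Ioo 0 ε₀ →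
      Continuous (h ε) ∧ Continuous (g ε) ∧
      (∀ z : ℂ, 0 ≤ h ε z) ∧ (∀ z : ℂ, 0 ≤ g ε z) ∧
      ∀ a b : ℂ, ‖J (a + b) - J a‖ ≤ ε * h ε a + g ε b)
    (u : (Fin N → ℝ) → ℂ) (v : ℕ → (Fin N → ℝ) → ℂ)
    (hu_meas : Measurable u) (hv_meas : ∀ n, Measurable (v n))
    -- (i) v_n → 0 a.e.
    (hv_ae : ∀ᵐ x : Fin N → ℝ, Tendsto (fun n => v n x) atTop (𝓝 0))
    -- (ii) J(u) ∈ L¹(ℝ^N)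
    (hJu : Integrable (fun x => J (u x)))
    -- (iii) limsup_n ∫ h_ε(v_n) ≤ C < ∞, C independent of ε
    (C : ℝ≥0∞) (hC : C < ⊤)
    (hiii : ∀ ε : ℝ, ε ∈ Set.Ioo 0 ε₀ →
      Filter.limsup (fun n => ∫⁻ x, ENNReal.ofReal (h ε (v n x))) atTop ≤ C)
    -- (iv) ∫ g_ε(u) < ∞
    (hiv : ∀ ε : ℝ, ε ∈ Set.Ioo 0 ε₀ →
      (∫⁻ x, ENNReal.ofReal (g ε (u x))) < ⊤) :
    Tendsto (fun n => ∫⁻ x, ENNReal.ofReal ‖J (u x + v n x) - J (v n x) - J (u x)‖)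
      atTop (𝓝 0) := by
  refine tendsto_of_le_liminf_of_limsup_le zero_le (le_of_eq ?_)
  refine ENNReal.eq_zero_of_forall_le_ofReal_mul hC.ne hε₀ fun ε hε => ?_
  obtain ⟨hh, hg, -, -, hJ_le⟩ := hhg ε hε
  calc _ ≤ ENNReal.ofReal ε * limsup (fun n => ∫⁻ x, ENNReal.ofReal (h ε (v n x))) atTop :=
        limsup_lintegral_norm_map_add_sub_sub_le hJ_cont hJ_zero hε.1.le hh.measurable
          hg.measurable hJ_le hu_meas hv_meas hv_ae hJu.hasFiniteIntegral (hiv ε hε).ne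
    _ ≤ ENNReal.ofReal ε * C := by gcongr; exact hiii ε hε
end
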